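/- With x_1,...,x_m, weights w_i, a, b, L as above, one has ‖∑_i w_i x_i‖² ≤ L² − (1/2)(a² − b²) ∑_i w_i(1 − w_i). -/

import Mathlib

/-! In any real inner product space the squared norm of a convex combination and the square of the
weighted mean of the norms are the double sums `∑ᵢ ∑ⱼ wᵢ wⱼ ⟪xᵢ, xⱼ⟫` and
`∑ᵢ ∑ⱼ wᵢ wⱼ ‖xᵢ‖ ‖xⱼ‖`. Their difference has zero diagonal terms, and by the polarization
identity `2 (‖u‖ ‖v‖ - ⟪u, v⟫) = ‖u - v‖² - (‖u‖ - ‖v‖)²` each off-diagonal term is at least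
`(a² - b²) / 2`; the off-diagonal weights sum to `∑ᵢ wᵢ (1 - wᵢ)`. -/

open scoped BigOperators

noncomputable def sval {d K : ℕ} (A : Matrix (Fin d) (Fin K) ℝ) (k : ℕ) : ℝ :=
  ⨆ W : {W : Submodule ℝ (EuclideanSpace ℝ (Fin K)) // Module.finrank ℝ W = k},
    ⨅ x : {x : EuclideanSpace ℝ (Fin K) // x ∈ W.1 ∧ ‖x‖ = 1},
      ‖Matrix.toEuclideanLin A x.1‖

noncomputable def vnorm {d : ℕ} (x : Fin d → ℝ) : ℝ :=
  Real.sqrt (∑ i, x i ^ 2)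

open Finset RealInnerProductSpace

lemma vnorm_eq_norm_toLp {d : ℕ} (y : Fin d → ℝ) :
    vnorm y = ‖(WithLp.toLp 2 y : EuclideanSpace ℝ (Fin d))‖ := by
  simp [vnorm, EuclideanSpace.norm_eq]

lemma mul_sum_mul_one_sub_le_sum_sum {ι : Type*} [Fintype ι] [DecidableEq ι]
    {w : ι → ℝ} (hw : ∀ i, 0 ≤ w i) (hwsum : ∑ i, w i = 1)
    {f : ι → ι → ℝ} {c : ℝ} (hdiag : ∀ i, f i i = 0) (hoff : ∀ i j, i ≠ j → c ≤ f i j) :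
    c * ∑ i, w i * (1 - w i) ≤ ∑ i, ∑ j, w i * w j * f i j := by
  rw [mul_sum]
  refine sum_le_sum fun i _ => ?_
  calc c * (w i * (1 - w i))
      = ∑ j ∈ univ.erase i, w i * w j * c := by
        rw [← sum_mul, ← mul_sum, sum_erase_eq_sub (mem_univ i), hwsum]; ring
    _ ≤ ∑ j ∈ univ.erase i, w i * w j * f i j :=
        sum_le_sum fun j hj => mul_le_mul_of_nonneg_left (hoff i j (ne_of_mem_erase hj).symm)
          (mul_nonneg (hw i) (hw j))
    _ = ∑ j, w i * w j * f i j := sum_erase _ (by simp [hdiag])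

section InnerProductSpace

variable {E : Type*} [NormedAddCommGroup E] [InnerProductSpace ℝ E]

lemma norm_mul_norm_sub_inner_eq (u v : E) :
    ‖u‖ * ‖v‖ - ⟪u, v⟫ = (‖u - v‖ ^ 2 - (‖u‖ - ‖v‖) ^ 2) / 2 := by
  rw [norm_sub_sq_real]; ring

lemma norm_sum_smul_sq_eq {ι : Type*} [Fintype ι] (w : ι → ℝ) (x : ι → E) :
    ‖∑ i, w i • x i‖ ^ 2 = ∑ i, ∑ j, w i * w j * ⟪x i, x j⟫ := by
  simp only [← real_inner_self_eq_norm_sq, sum_inner, inner_sum, real_inner_smul_left,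
    real_inner_smul_right]
  exact sum_congr rfl fun i _ => sum_congr rfl fun j _ => by rw [real_inner_comm]; ring

lemma norm_sum_smul_sq_le {ι : Type*} [Fintype ι] [DecidableEq ι]
    {w : ι → ℝ} (hw : ∀ i, 0 ≤ w i) (hwsum : ∑ i, w i = 1) {x : ι → E} {c : ℝ}
    (hoff : ∀ i j, i ≠ j → c ≤ ‖x i‖ * ‖x j‖ - ⟪x i, x j⟫) :
    ‖∑ i, w i • x i‖ ^ 2 ≤ (∑ i, w i * ‖x i‖) ^ 2 - c * ∑ i, w i * (1 - w i) := by
  have hgap := mul_sum_mul_one_sub_le_sum_sum hw hwsum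
    (f := fun i j => ‖x i‖ * ‖x j‖ - ⟪x i, x j⟫)
    (fun i => by simp [sq]) hoff
  have hsq : (∑ i, w i * ‖x i‖) ^ 2 = ∑ i, ∑ j, w i * w j * (‖x i‖ * ‖x j‖) := by
    rw [sq, sum_mul_sum]
    exact sum_congr rfl fun i _ => sum_congr rfl fun j _ => by ring
  have hsplit : ∑ i, ∑ j, w i * w j * (‖x i‖ * ‖x j‖ - ⟪x i, x j⟫) =
      ∑ i, ∑ j, w i * w j * (‖x i‖ * ‖x j‖) - ∑ i, ∑ j, w i * w j * ⟪x i, x j⟫ := by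
    simp only [mul_sub, sum_sub_distrib]
  rw [norm_sum_smul_sq_eq, hsq]
  linarith

lemma half_sq_sub_sq_le_norm_mul_norm_sub_inner {a b : ℝ} {u v : E} (ha : 0 ≤ a)
    (hau : a ≤ ‖u - v‖) (hb : |‖u‖ - ‖v‖| ≤ b) :
    1 / 2 * (a ^ 2 - b ^ 2) ≤ ‖u‖ * ‖v‖ - ⟪u, v⟫ := by
  have ha2 : a ^ 2 ≤ ‖u - v‖ ^ 2 := pow_le_pow_left₀ ha hau 2
  have hb2 : (‖u‖ - ‖v‖) ^ 2 ≤ b ^ 2 := sq_le_sq' (abs_le.mp hb).1 (abs_le.mp hb).2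
  rw [norm_mul_norm_sub_inner_eq]
  linarith

end InnerProductSpace

theorem stmt_3_general (d m : ℕ) (x : Fin m → Fin d → ℝ)
    (a b : ℝ)
    (ha : a = ⨅ p : {p : Fin m × Fin m // p.1 ≠ p.2}, vnorm (x p.1.1 - x p.1.2))
    (hb : b = ⨆ p : {p : Fin m × Fin m // p.1 ≠ p.2}, |vnorm (x p.1.1) - vnorm (x p.1.2)|)
    (w : Fin m → ℝ) (hw : ∀ i, 0 ≤ w i) (hwsum : ∑ i, w i = 1)
    (L : ℝ) (hL : L = ∑ i, w i * vnorm (x i)) :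
    vnorm (∑ i, w i • x i) ^ 2 ≤ L ^ 2 - (1 / 2) * (a ^ 2 - b ^ 2) * ∑ i, w i * (1 - w i) := by
  have ha0 : 0 ≤ a := ha ▸ Real.iInf_nonneg fun _ => Real.sqrt_nonneg _
  have hle_a : ∀ i j, i ≠ j → a ≤ vnorm (x i - x j) := fun i j h => by
    rw [ha]
    exact ciInf_le (Finite.bddBelow_range _) (⟨(i, j), h⟩ : {p : Fin m × Fin m // p.1 ≠ p.2})
  have hle_b : ∀ i j, i ≠ j → |vnorm (x i) - vnorm (x j)| ≤ b := fun i j h => by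
    rw [hb]
    exact le_ciSup (f := fun p : {p : Fin m × Fin m // p.1 ≠ p.2} =>
      |vnorm (x p.1.1) - vnorm (x p.1.2)|) (Finite.bddAbove_range _) ⟨(i, j), h⟩
  simp only [hL, vnorm_eq_norm_toLp, WithLp.toLp_sum, WithLp.toLp_smul, WithLp.toLp_sub]
    at hle_a hle_b ⊢
  exact norm_sum_smul_sq_le hw hwsum fun i j h =>
    half_sq_sub_sq_le_norm_mul_norm_sub_inner ha0 (hle_a i j h) (hle_b i j h)

/-- squared-norm deficit of a convex combination. -/
theorem stmt_3 (d m : ℕ) (hm : 2 ≤ m) (x : Fin m → Fin d → ℝ)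
    (a b : ℝ)
    (ha : a = ⨅ p : {p : Fin m × Fin m // p.1 ≠ p.2}, vnorm (x p.1.1 - x p.1.2))
    (hb : b = ⨆ p : {p : Fin m × Fin m // p.1 ≠ p.2}, |vnorm (x p.1.1) - vnorm (x p.1.2)|)
    (w : Fin m → ℝ) (hw : ∀ i, 0 ≤ w i) (hwsum : ∑ i, w i = 1)
    (L : ℝ) (hL : L = ∑ i, w i * vnorm (x i)) :
    vnorm (∑ i, w i • x i) ^ 2 ≤ L ^ 2 - (1 / 2) * (a ^ 2 - b ^ 2) * ∑ i, w i * (1 - w i) :=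
  stmt_3_general d m x a b ha hb w hw hwsum L hL
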